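/- Let ⊖ be the uniform Kronecker difference given by matrices υ_n (tr(υ_n)=1) via A⊖B = tr₁₂(α_{m,n}ᵀ(A⊗I_m − I_m⊗B⊗I_m)) with α_{m,n} = Σ_{i,j} E_{ij}⊗υ_n⊗E_{ji}. If (X⊖Y)⊖Z = X⊖(Z⊕Y) for all X ∈ F^{mpq×mpq}, Y ∈ F^{q×q}, Z ∈ F^{p×p}, and all m,p,q, then υ_{pq} = υ_p ⊗ υ_q = υ_q ⊗ υ_p for all p,q ∈ ℕ. -/

import Mathlib

/-!
Take `m = 1`, `Y = Z = 0` and `X` a matrix unit `E_{(a',b'),(a,b)}` in the associativity law.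
Subtracting `0` contracts the last tensor factor against `υ`, so a matrix unit `E_{(i,k'),(j,k)}`
goes to `υ(k',k) E_{ij}`. Hence the left side is `υ_p(a',a) υ_q(b',b) E_{00}` and the right side
is `υ_{pq}((a',b'),(a,b)) E_{00}`. The second identity is commutativity of the Kronecker product
up to swapping the factors.
-/

open Matrix Kronecker

/-- The Kronecker sum `A ⊕ B = A ⊗ I + I ⊗ B`. -/
def ksum {F : Type*} [Semiring F] {α β : Type*} [Fintype α] [Fintype β]
    [DecidableEq α] [DecidableEq β]
    (A : Matrix α α F) (B : Matrix β β F) : Matrix (α × β) (α × β) F :=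
  A ⊗ₖ (1 : Matrix β β F) + (1 : Matrix α α F) ⊗ₖ B

/-- Partial trace over the first two tensor factors:
`tr12 (A ⊗ B ⊗ C) = tr A * tr B • C`. -/
def tr12 {F : Type*} [AddCommMonoid F] {α β γ : Type*} [Fintype α] [Fintype β]
    (M : Matrix ((α × β) × γ) ((α × β) × γ) F) : Matrix γ γ F :=
  Matrix.of fun c d => ∑ p : α × β, M (p, c) (p, d)

/-- Partial trace over the first tensor factor: `tr1 (A ⊗ B ⊗ C) = tr A • (B ⊗ C)`. -/
def tr1 {F : Type*} [AddCommMonoid F] {α β γ : Type*} [Fintype α]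
    (M : Matrix ((α × β) × γ) ((α × β) × γ) F) : Matrix (β × γ) (β × γ) F :=
  Matrix.of fun p q => ∑ i : α, M ((i, p.1), p.2) ((i, q.1), q.2)

/-- Partial trace over the middle tensor factor: `tr2 (A ⊗ B ⊗ C) = tr B • (A ⊗ C)`. -/
def tr2 {F : Type*} [AddCommMonoid F] {α β γ : Type*} [Fintype β]
    (M : Matrix ((α × β) × γ) ((α × β) × γ) F) : Matrix (α × γ) (α × γ) F :=
  Matrix.of fun p q => ∑ k : β, M ((p.1, k), p.2) ((q.1, k), q.2)

/-- Partial trace over the third tensor factor: `tr3 (A ⊗ B ⊗ C) = tr C • (A ⊗ B)`. -/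
def tr3 {F : Type*} [AddCommMonoid F] {α β γ : Type*} [Fintype γ]
    (M : Matrix ((α × β) × γ) ((α × β) × γ) F) : Matrix (α × β) (α × β) F :=
  Matrix.of fun p q => ∑ c : γ, M (p, c) (q, c)

/-- Partial trace over the second factor of a twofold Kronecker product:
`ptr (B ⊗ C) = tr C • B`. -/
def ptr {F : Type*} [AddCommMonoid F] {α β : Type*} [Fintype β]
    (M : Matrix (α × β) (α × β) F) : Matrix α α F :=
  Matrix.of fun i j => ∑ k : β, M (i, k) (j, k)

/-- Partial transpose in the third tensor factor: `pT3 (A ⊗ B ⊗ C) = A ⊗ B ⊗ Cᵀ`. -/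
def pT3 {F : Type*} {α β γ : Type*}
    (M : Matrix ((α × β) × γ) ((α × β) × γ) F) : Matrix ((α × β) × γ) ((α × β) × γ) F :=
  Matrix.of fun p q => M (p.1, q.2) (q.1, p.2)

/-- Partial transpose in the first two tensor factors:
`pT12 (A ⊗ B ⊗ C) = Aᵀ ⊗ Bᵀ ⊗ C`. -/
def pT12 {F : Type*} {α β γ : Type*}
    (M : Matrix ((α × β) × γ) ((α × β) × γ) F) : Matrix ((α × β) × γ) ((α × β) × γ) F :=
  Matrix.of fun p q => M (q.1, p.2) (p.1, q.2)

/-- The Kronecker difference generated by the family `υ`. -/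
def kdiff {F : Type*} [Field F] (υ : ∀ n : ℕ, Matrix (Fin n) (Fin n) F)
    {α : Type*} [Fintype α] [DecidableEq α] {n : ℕ}
    (A : Matrix (α × Fin n) (α × Fin n) F) (B : Matrix (Fin n) (Fin n) F) :
    Matrix α α F :=
  tr12 ((∑ i : α, ∑ j : α,
      Matrix.single i j (1 : F) ⊗ₖ υ n ⊗ₖ Matrix.single j i (1 : F))ᵀ *
    (A ⊗ₖ (1 : Matrix α α F) -
      ((1 : Matrix α α F) ⊗ₖ B) ⊗ₖ (1 : Matrix α α F)))

section

variable {F : Type*} [Field F] (υ : ∀ n : ℕ, Matrix (Fin n) (Fin n) F)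

theorem kdiff_zero_right_apply {α : Type*} [Fintype α] [DecidableEq α] {n : ℕ}
    (A : Matrix (α × Fin n) (α × Fin n) F) (c d : α) :
    kdiff υ A 0 c d = ∑ k : Fin n, ∑ k' : Fin n, υ n k' k * A (c, k') (d, k) := by
  simp [kdiff, tr12, mul_apply, Matrix.sum_apply, one_apply, single,
    Fintype.sum_prod_type, ite_and]

theorem kdiff_single_zero {α : Type*} [Fintype α] [DecidableEq α] {n : ℕ}
    (i j : α) (k' k : Fin n) (x : F) :
    kdiff υ (single (i, k') (j, k) x) 0 = single i j (υ n k' k * x) := by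
  ext c d
  rw [kdiff_zero_right_apply]
  simp only [single_apply, Prod.mk.injEq, and_and_and_comm, ite_and]
  simp

end

theorem ksum_zero_zero {R α β : Type*} [Semiring R] [Fintype α] [Fintype β] [DecidableEq α]
    [DecidableEq β] : ksum (0 : Matrix α α R) (0 : Matrix β β R) = 0 := by
  simp [ksum]

theorem Matrix.reindex_prodComm_kronecker {R l m n o : Type*} [CommMagma R]
    (A : Matrix l m R) (B : Matrix n o R) :
    reindex (Equiv.prodComm n l) (Equiv.prodComm o m) (B ⊗ₖ A) = A ⊗ₖ B := by
  ext ⟨a, b⟩ ⟨a', b'⟩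
  simp [mul_comm]

theorem stmt12_general {F : Type*} [Field F] (υ : ∀ n : ℕ, Matrix (Fin n) (Fin n) F)
    (hassoc : ∀ (m p q : ℕ), 0 < m → 0 < p → 0 < q →
      ∀ (X : Matrix ((Fin m × Fin p) × Fin q) ((Fin m × Fin p) × Fin q) F)
        (Y : Matrix (Fin q) (Fin q) F) (Z : Matrix (Fin p) (Fin p) F),
      kdiff υ (kdiff υ X Y) Z =
        kdiff υ (Matrix.reindex
            ((Equiv.prodAssoc (Fin m) (Fin p) (Fin q)).trans
              ((Equiv.refl (Fin m)).prodCongr finProdFinEquiv))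
            ((Equiv.prodAssoc (Fin m) (Fin p) (Fin q)).trans
              ((Equiv.refl (Fin m)).prodCongr finProdFinEquiv)) X)
          (Matrix.reindex finProdFinEquiv finProdFinEquiv (ksum Z Y))) :
    ∀ (p q : ℕ), 0 < p → 0 < q →
      υ (p * q) = Matrix.reindex finProdFinEquiv finProdFinEquiv (υ p ⊗ₖ υ q) ∧
      υ p ⊗ₖ υ q = Matrix.reindex (Equiv.prodComm (Fin q) (Fin p))
        (Equiv.prodComm (Fin q) (Fin p)) (υ q ⊗ₖ υ p) := by
  intro p q hp hq
  refine ⟨?_, (reindex_prodComm_kronecker _ _).symm⟩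
  ext K' K
  obtain ⟨⟨a', b'⟩, rfl⟩ := finProdFinEquiv.surjective K'
  obtain ⟨⟨a, b⟩, rfl⟩ := finProdFinEquiv.surjective K
  have h := hassoc 1 p q one_pos hp hq
    (single (((0 : Fin 1), a'), b') (((0 : Fin 1), a), b) (1 : F)) 0 0
  simp only [kdiff_single_zero, ksum_zero_zero, reindex_apply,
    submatrix_single_equiv, submatrix_zero, Pi.zero_apply, Equiv.symm_symm,
    Equiv.trans_apply, Equiv.prodAssoc_apply, Equiv.prodCongr_apply, Prod.map_apply,
    Equiv.refl_apply] at h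
  simpa using (congrFun (congrFun h 0) 0).symm

theorem stmt12 {F : Type*} [Field F] (υ : ∀ n : ℕ, Matrix (Fin n) (Fin n) F)
    (hυ : ∀ n : ℕ, 0 < n → trace (υ n) = 1)
    (hassoc : ∀ (m p q : ℕ), 0 < m → 0 < p → 0 < q →
      ∀ (X : Matrix ((Fin m × Fin p) × Fin q) ((Fin m × Fin p) × Fin q) F)
        (Y : Matrix (Fin q) (Fin q) F) (Z : Matrix (Fin p) (Fin p) F),
      kdiff υ (kdiff υ X Y) Z =
        kdiff υ (Matrix.reindex
            ((Equiv.prodAssoc (Fin m) (Fin p) (Fin q)).trans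
              ((Equiv.refl (Fin m)).prodCongr finProdFinEquiv))
            ((Equiv.prodAssoc (Fin m) (Fin p) (Fin q)).trans
              ((Equiv.refl (Fin m)).prodCongr finProdFinEquiv)) X)
          (Matrix.reindex finProdFinEquiv finProdFinEquiv (ksum Z Y))) :
    ∀ (p q : ℕ), 0 < p → 0 < q →
      υ (p * q) = Matrix.reindex finProdFinEquiv finProdFinEquiv (υ p ⊗ₖ υ q) ∧
      υ p ⊗ₖ υ q = Matrix.reindex (Equiv.prodComm (Fin q) (Fin p))
        (Equiv.prodComm (Fin q) (Fin p)) (υ q ⊗ₖ υ p) :=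
  stmt12_general υ hassoc
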